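/- In the setting of the induced connection D_ψ on the extension of scalars N ⊗_B A: the curvature satisfies R_{D_ψ}(n ⊗ 1_A) = (id ⊗_B ψ)(R_D(n)) for all n ∈ N; i.e. D_ψ²(n ⊗ 1_A) = (id ⊗_B ψ)(D²(n)), where D² is the curvature of D on N ⊗_B Ω_•(B) and id ⊗_B ψ : N ⊗_B Ω_•(B) → N ⊗_B Ω_•(A) applies Ω_•(ψ) to the form factor. -/

import Mathlib

/-!
The two K-linear maps `D_ψ ∘ (id ⊗ ψ)` and `(id ⊗ ψ) ∘ D` agree on every generator `n ⊗ ω` of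
`N ⊗_B Ω•(B)`: both satisfy the Leibniz rule there, and `ψ` commutes with the differentials.
Hence they are equal, and applying this to `D(n)` together with `D_ψ(n ⊗ 1) = (id ⊗ ψ)(D n)`
gives `D_ψ²(n ⊗ 1) = (id ⊗ ψ)(D² n)`.
-/

open MulOpposite

section InducedConnection

variable {K ΩB ΩA N EB EA : Type*} [CommSemiring K] [Semiring ΩB] [Semiring ΩA]
  [AddCommMonoid N] [Module K N]
  [AddCommMonoid EB] [Module K EB] [Module ΩBᵐᵒᵖ EB]
  [AddCommMonoid EA] [Module K EA] [Module ΩAᵐᵒᵖ EA]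
  {ψΩ : ΩB → ΩA} {dB : ΩB → ΩB} {dA : ΩA → ΩA}
  {ιB : N →ₗ[K] EB} {DB : EB →ₗ[K] EB} {idψ : EB →ₗ[K] EA} {DA : EA →ₗ[K] EA}

theorem induced_connection_apply_smul_generator
    (hchain : ∀ ω, dA (ψΩ ω) = ψΩ (dB ω))
    (hDB_leib : ∀ n ω, DB (op ω • ιB n) = op ω • DB (ιB n) + op (dB ω) • ιB n)
    (hsemi : ∀ ω x, idψ (op ω • x) = op (ψΩ ω) • idψ x)
    (hDA0 : ∀ n, DA (idψ (ιB n)) = idψ (DB (ιB n)))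
    (hDA_leib : ∀ n ω,
      DA (op ω • idψ (ιB n)) = op ω • DA (idψ (ιB n)) + op (dA ω) • idψ (ιB n))
    (n : N) (ω : ΩB) :
    DA (idψ (op ω • ιB n)) = idψ (DB (op ω • ιB n)) := by
  rw [hsemi, hDA_leib, hDA0, hchain, ← hsemi, ← hsemi, ← map_add, hDB_leib]

theorem induced_connection_comp_eq
    (hchain : ∀ ω, dA (ψΩ ω) = ψΩ (dB ω))
    (hspan : Submodule.span K {y : EB | ∃ (n : N) (ω : ΩB), y = op ω • ιB n} = ⊤)
    (hDB_leib : ∀ n ω, DB (op ω • ιB n) = op ω • DB (ιB n) + op (dB ω) • ιB n)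
    (hsemi : ∀ ω x, idψ (op ω • x) = op (ψΩ ω) • idψ x)
    (hDA0 : ∀ n, DA (idψ (ιB n)) = idψ (DB (ιB n)))
    (hDA_leib : ∀ n ω,
      DA (op ω • idψ (ιB n)) = op ω • DA (idψ (ιB n)) + op (dA ω) • idψ (ιB n)) :
    DA ∘ₗ idψ = idψ ∘ₗ DB :=
  LinearMap.ext_on hspan <| by
    rintro _ ⟨n, ω, rfl⟩
    exact induced_connection_apply_smul_generator hchain hDB_leib hsemi hDA0 hDA_leib n ω

end InducedConnection

theorem curvature_of_induced_connection_general
    (K : Type*) [Field K]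
    (ΩB ΩA : Type*) [Ring ΩB] [Ring ΩA] [Algebra K ΩB] [Algebra K ΩA]
    (ψΩ : ΩB →ₐ[K] ΩA)
    (dB : ΩB →ₗ[K] ΩB) (dA : ΩA →ₗ[K] ΩA)
    (hchain : ∀ ω : ΩB, dA (ψΩ ω) = ψΩ (dB ω))
    -- N and EB = N ⊗_B Ω•(B)
    (N : Type*) [AddCommGroup N] [Module K N]
    (EB : Type*) [AddCommGroup EB] [Module K EB] [Module ΩBᵐᵒᵖ EB]
    (ιB : N →ₗ[K] EB)
    (hspan : ∀ x : EB,
      x ∈ Submodule.span K {y : EB | ∃ (n : N) (ω : ΩB), y = op ω • ιB n})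
    -- the extended connection DB on EB (Leibniz on degree-zero generators)
    (DB : EB →ₗ[K] EB)
    (hDB_leib : ∀ (n : N) (ω : ΩB),
      DB (op ω • ιB n) = op ω • DB (ιB n) + op (dB ω) • ιB n)
    -- EA = N ⊗_B Ω•(A) and the map idψ = id ⊗_B ψ, semilinear over ψΩ
    (EA : Type*) [AddCommGroup EA] [Module K EA] [Module ΩAᵐᵒᵖ EA]
    (idψ : EB →ₗ[K] EA)
    (hsemi : ∀ (ω : ΩB) (x : EB), idψ (op ω • x) = op (ψΩ ω) • idψ x)
    -- the induced connection DA = D_ψ on EA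
    (DA : EA →ₗ[K] EA)
    (hDA0 : ∀ n : N, DA (idψ (ιB n)) = idψ (DB (ιB n)))
    (hDA_leib : ∀ (n : N) (ω : ΩA),
      DA (op ω • idψ (ιB n)) = op ω • DA (idψ (ιB n)) + op (dA ω) • idψ (ιB n)) :
    ∀ n : N, DA (DA (idψ (ιB n))) = idψ (DB (DB (ιB n))) := by
  have hcomp : DA ∘ₗ idψ = idψ ∘ₗ DB :=
    induced_connection_comp_eq hchain (Submodule.eq_top_iff'.mpr hspan) hDB_leib hsemi hDA0
      hDA_leib
  intro n
  rw [hDA0, ← LinearMap.comp_apply, hcomp, LinearMap.comp_apply]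

theorem curvature_of_induced_connection
    (K : Type*) [Field K]
    (ΩB ΩA : Type*) [Ring ΩB] [Ring ΩA] [Algebra K ΩB] [Algebra K ΩA]
    (ψΩ : ΩB →ₐ[K] ΩA)
    (dB : ΩB →ₗ[K] ΩB) (dA : ΩA →ₗ[K] ΩA)
    (hchain : ∀ ω : ΩB, dA (ψΩ ω) = ψΩ (dB ω))
    -- N and EB = N ⊗_B Ω•(B)
    (N : Type*) [AddCommGroup N] [Module K N]
    (EB : Type*) [AddCommGroup EB] [Module K EB] [Module ΩBᵐᵒᵖ EB]
    [SMulCommClass K ΩBᵐᵒᵖ EB]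
    (ιB : N →ₗ[K] EB)
    (hspan : ∀ x : EB,
      x ∈ Submodule.span K {y : EB | ∃ (n : N) (ω : ΩB), y = op ω • ιB n})
    -- the extended connection DB on EB (Leibniz on degree-zero generators)
    (DB : EB →ₗ[K] EB)
    (hDB_leib : ∀ (n : N) (ω : ΩB),
      DB (op ω • ιB n) = op ω • DB (ιB n) + op (dB ω) • ιB n)
    -- EA = N ⊗_B Ω•(A) and the map idψ = id ⊗_B ψ, semilinear over ψΩ
    (EA : Type*) [AddCommGroup EA] [Module K EA] [Module ΩAᵐᵒᵖ EA]
    (idψ : EB →ₗ[K] EA)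
    (hsemi : ∀ (ω : ΩB) (x : EB), idψ (op ω • x) = op (ψΩ ω) • idψ x)
    -- the induced connection DA = D_ψ on EA
    (DA : EA →ₗ[K] EA)
    (hDA0 : ∀ n : N, DA (idψ (ιB n)) = idψ (DB (ιB n)))
    (hDA_leib : ∀ (n : N) (ω : ΩA),
      DA (op ω • idψ (ιB n)) = op ω • DA (idψ (ιB n)) + op (dA ω) • idψ (ιB n)) :
    ∀ n : N, DA (DA (idψ (ιB n))) = idψ (DB (DB (ιB n))) :=
  curvature_of_induced_connection_general K ΩB ΩA ψΩ dB dA hchain N EB ιB hspan DB hDB_leib EA idψ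
    hsemi DA hDA0 hDA_leib
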